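/- arXiv:2509.23606 — 4 statements merged into one kernel-verified Lean document; each statement's English description precedes it below -/
import Mathlib

section
/- Let G = (V,E) be a finite simple graph and u ∈ V such that the set N̄[u] of vertices at complement-distance 0 or 1 from u (i.e., u together with all vertices non-adjacent to u) forms an independent set in G. Then χ(G) = χ(G[N(u)]) + 1. -/
/-!
Any proper colouring of `G` gives the neighbourhood of `u` a colouring that avoids the colour of
`u`, so `χ(G[N(u)]) + 1 ≤ χ(G)`. Conversely, the complement of `N(u)` is `N̄[u]`, an independent
set, so a colouring of `G[N(u)]` extends to `G` with one fresh colour on `N̄[u]`.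
-/

namespace SimpleGraph

variable {V : Type*} {G : SimpleGraph V}

theorem Colorable.induce_neighborSet {n : ℕ} (u : V) (hG : G.Colorable (n + 1)) :
    (G.induce (G.neighborSet u)).Colorable n := by
  obtain ⟨C⟩ := hG
  let C' : (G.induce (G.neighborSet u)).Coloring {c // c ≠ C u} :=
    Coloring.mk (fun v => ⟨C v, fun hc => C.valid v.2 hc.symm⟩)
      (fun hab hc => C.valid hab (congrArg Subtype.val hc))
  simpa [Fintype.card_subtype_compl] using C'.colorable

theorem chromaticNumber_induce_neighborSet_add_one_le (u : V) :
    (G.induce (G.neighborSet u)).chromaticNumber + 1 ≤ G.chromaticNumber := by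
  rw [chromaticNumber_eq_iInf G]
  refine le_iInf fun ⟨m, hG⟩ => ?_
  obtain _ | n := m
  · exact Fin.elim0 (hG.some u)
  · push_cast
    gcongr
    exact (Colorable.induce_neighborSet u hG).chromaticNumber_le

theorem Colorable.of_isIndepSet_of_induce_compl {s : Set V} {n : ℕ} (hs : G.IsIndepSet s)
    (hG : (G.induce sᶜ).Colorable n) : G.Colorable (n + 1) := by
  classical
  obtain ⟨C⟩ := hG
  refine ⟨Coloring.mk
    (fun v => if hv : v ∈ s then Fin.last n else (C ⟨v, hv⟩).castSucc) fun {a b} hab => ?_⟩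
  by_cases ha : a ∈ s <;> by_cases hb : b ∈ s <;> simp only [ha, hb, dite_true, dite_false]
  · exact (hs ha hb (G.ne_of_adj hab) hab).elim
  · exact (Fin.castSucc_lt_last _).ne'
  · exact (Fin.castSucc_lt_last _).ne
  · exact fun hc => C.valid (v := ⟨a, ha⟩) (w := ⟨b, hb⟩) hab (Fin.castSucc_injective _ hc)

theorem chromaticNumber_le_induce_compl_add_one {s : Set V} (hs : G.IsIndepSet s) :
    G.chromaticNumber ≤ (G.induce sᶜ).chromaticNumber + 1 := by
  induction h : (G.induce sᶜ).chromaticNumber using ENat.recTopCoe with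
  | top => simp
  | coe n =>
    exact_mod_cast (Colorable.of_isIndepSet_of_induce_compl hs
      (chromaticNumber_le_iff_colorable.mp h.le)).chromaticNumber_le

end SimpleGraph

theorem stmt_7_general {V : Type*} (G : SimpleGraph V) (u : V)
    (h : (insert u {v : V | v ≠ u ∧ ¬ G.Adj u v}).Pairwise fun a b => ¬ G.Adj a b) :
    G.chromaticNumber = (G.induce (G.neighborSet u)).chromaticNumber + 1 := by
  have hcompl : insert u {v : V | v ≠ u ∧ ¬ G.Adj u v} = (G.neighborSet u)ᶜ := by
    ext v
    by_cases hv : v = u <;> simp [hv]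
  refine le_antisymm ?_ (G.chromaticNumber_induce_neighborSet_add_one_le u)
  rw [← compl_compl (G.neighborSet u), ← hcompl]
  exact SimpleGraph.chromaticNumber_le_induce_compl_add_one h

theorem stmt_7 {V : Type*} [Fintype V] (G : SimpleGraph V) (u : V)
    (h : (insert u {v : V | v ≠ u ∧ ¬ G.Adj u v}).Pairwise fun a b => ¬ G.Adj a b) :
    G.chromaticNumber = (G.induce (G.neighborSet u)).chromaticNumber + 1 :=
  stmt_7_general G u h
end

section
/- Let G = (V,E) be a finite simple graph and let (B,C) be disjoint vertex sets such that: C is a clique in G; B is exactly the set of vertices outside C non-adjacent (in G) to some vertex of C; and there is a matching in the complement graph Ḡ between B and C saturating B. Then χ(G) = χ(G[V \ (B ∪ C)]) + |C|. -/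
theorem stmt_9 {V : Type*} [Fintype V] (G : SimpleGraph V) (B C : Set V)
    (hdisj : Disjoint B C)
    (hclique : G.IsClique C)
    (hB : B = {v : V | v ∉ C ∧ ∃ c ∈ C, ¬ G.Adj v c})
    (M : B → C) (hMinj : Function.Injective M)
    (hM : ∀ b : B, ¬ G.Adj (b : V) (M b : V)) :
    G.chromaticNumber = (G.induce ((B ∪ C)ᶜ : Set V)).chromaticNumber + C.ncard := by
  classical
  set G' := G.induce ((B ∪ C)ᶜ : Set V) with hG'
  -- every vertex outside B ∪ C is adjacent to all of C
  have hout : ∀ v, v ∉ B → v ∉ C → ∀ c ∈ C, G.Adj v c := by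
    intro v hvB hvC c hc
    by_contra h
    exact hvB (hB ▸ ⟨hvC, c, hc, h⟩)
  have hCcard : C.ncard = Fintype.card C := by
    rw [Set.ncard_eq_toFinset_card', Set.toFinset_card]
  -- G' chromatic number is finite
  have hcol' : G'.Colorable (ENat.toNat G'.chromaticNumber) :=
    G'.colorable_chromaticNumber_of_fintype
  set k : ℕ := ENat.toNat G'.chromaticNumber with hk
  have hχ' : G'.chromaticNumber = (k : ℕ∞) := by
    rw [hk, ENat.coe_toNat]
    exact (SimpleGraph.chromaticNumber_ne_top_iff_exists).2 ⟨_, hcol'⟩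
  have hcolG : G.Colorable (ENat.toNat G.chromaticNumber) :=
    G.colorable_chromaticNumber_of_fintype
  set n : ℕ := ENat.toNat G.chromaticNumber with hn
  have hχ : G.chromaticNumber = (n : ℕ∞) := by
    rw [hn, ENat.coe_toNat]
    exact (SimpleGraph.chromaticNumber_ne_top_iff_exists).2 ⟨_, hcolG⟩
  apply le_antisymm
  · -- upper bound: extend a k-coloring of G' to a (k + |C|)-coloring of G
    obtain ⟨c'⟩ := hcol'
    have hfc : ∀ v : V, v ∉ C → v ∉ B → v ∈ ((B ∪ C)ᶜ : Set V) := by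
      intro v h1 h2; simp [h1, h2]
    let f : V → (Fin k ⊕ C) := fun v =>
      if hv : v ∈ C then Sum.inr ⟨v, hv⟩
      else if hb : v ∈ B then Sum.inr (M ⟨v, hb⟩)
      else Sum.inl (c' ⟨v, hfc v hv hb⟩)
    have hvalid : ∀ {v w : V}, G.Adj v w → f v ≠ f w := by
      intro v w hvw heq
      simp only [f] at heq
      by_cases hvC : v ∈ C <;> by_cases hwC : w ∈ C <;>
        simp only [hvC, hwC, dif_pos, dif_neg, not_false_iff] at heq
      · -- both in C
        exact hvw.ne (congrArg Subtype.val (Sum.inr_injective heq))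
      · -- v ∈ C, w ∉ C
        by_cases hwB : w ∈ B <;> simp only [hwB, dif_pos, dif_neg, not_false_iff] at heq
        · have : (M ⟨w, hwB⟩ : V) = v := by
            have := Sum.inr_injective heq.symm
            exact congrArg Subtype.val this
          exact hM ⟨w, hwB⟩ (this ▸ hvw.symm)
        · exact Sum.inr_ne_inl heq
      · -- v ∉ C, w ∈ C
        by_cases hvB : v ∈ B <;> simp only [hvB, dif_pos, dif_neg, not_false_iff] at heq
        · have : (M ⟨v, hvB⟩ : V) = w := by
            have := Sum.inr_injective heq
            exact congrArg Subtype.val this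
          exact hM ⟨v, hvB⟩ (this ▸ hvw)
        · exact Sum.inl_ne_inr heq
      · -- neither in C
        by_cases hvB : v ∈ B <;> by_cases hwB : w ∈ B <;>
          simp only [hvB, hwB, dif_pos, dif_neg, not_false_iff] at heq
        · have := hMinj (Subtype.ext (congrArg Subtype.val (Sum.inr_injective heq)) :
            M ⟨v, hvB⟩ = M ⟨w, hwB⟩)
          exact hvw.ne (congrArg Subtype.val this)
        · exact Sum.inr_ne_inl heq
        · exact Sum.inl_ne_inr heq
        · exact c'.valid (by exact hvw : G'.Adj ⟨v, hfc v hvC hvB⟩ ⟨w, hfc w hwC hwB⟩)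
            (Sum.inl_injective heq)
    have hcolG2 : G.Colorable (k + Fintype.card C) := by
      have := (SimpleGraph.Coloring.mk f hvalid).colorable
      rwa [Fintype.card_sum, Fintype.card_fin] at this
    calc G.chromaticNumber ≤ ((k + Fintype.card C : ℕ) : ℕ∞) :=
          hcolG2.chromaticNumber_le
      _ = G'.chromaticNumber + C.ncard := by
          rw [hχ', hCcard]; push_cast; ring
  · -- lower bound
    obtain ⟨col⟩ := hcolG
    have hginj : Function.Injective fun c : C => col (c : V) := by
      intro c c' hcc
      by_contra hne
      exact col.valid (hclique c.2 c'.2 (fun h => hne (Subtype.ext h))) hcc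
    set g : C → Fin n := fun c => col (c : V) with hg
    -- coloring of G' avoiding Set.range g
    have hmem : ∀ v : ((B ∪ C)ᶜ : Set V), col (v : V) ∈ (Set.range g)ᶜ := by
      rintro ⟨v, hv⟩ ⟨c, hc⟩
      simp only [Set.mem_compl_iff, Set.mem_union, not_or] at hv
      exact col.valid (hout v hv.1 hv.2 c c.2) hc.symm
    let f' : G'.Coloring ((Set.range g)ᶜ : Set (Fin n)) :=
      SimpleGraph.Coloring.mk (fun v => ⟨col (v : V), hmem v⟩)
        (fun {v w} hvw heq => col.valid hvw (congrArg Subtype.val heq))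
    have hcard : Fintype.card ((Set.range g)ᶜ : Set (Fin n)) = n - Fintype.card C := by
      rw [Fintype.card_compl_set, Set.card_range_of_injective hginj, Fintype.card_fin]
    have hcol'' : G'.Colorable (n - Fintype.card C) := by
      have := f'.colorable
      rwa [hcard] at this
    have hCn : Fintype.card C ≤ n := by
      have := Fintype.card_le_of_injective g hginj
      simpa using this
    calc G'.chromaticNumber + C.ncard
        ≤ ((n - Fintype.card C : ℕ) : ℕ∞) + C.ncard :=
          add_le_add_left hcol''.chromaticNumber_le _
      _ = ((n - Fintype.card C + Fintype.card C : ℕ) : ℕ∞) := by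
          rw [hCcard]; push_cast; ring
      _ = (n : ℕ∞) := by rw [Nat.sub_add_cancel hCn]
      _ = G.chromaticNumber := hχ.symm
end

section
/- Let G = (V,E) be a finite simple graph and {u,v} ∈ E an edge such that the non-neighbors of u and of v coincide and equal {x, y} for two distinct vertices x, y (i.e., N̄(u) = N̄(v) = {x,y}). Then {u,x} and {v,y} are each independent sets of size 2 in G, and χ(G) = χ(G[N(u) \ {v}]) + 2. -/
theorem stmt_11 {V : Type*} [Fintype V] (G : SimpleGraph V) (u v x y : V)
    (huv : G.Adj u v) (hxy : x ≠ y)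
    (hu : {z : V | z ≠ u ∧ ¬ G.Adj u z} = {x, y})
    (hv : {z : V | z ≠ v ∧ ¬ G.Adj v z} = {x, y}) :
    u ≠ x ∧ ¬ G.Adj u x ∧ v ≠ y ∧ ¬ G.Adj v y ∧
    G.chromaticNumber =
      (G.induce ((G.neighborSet u \ {v}) : Set V)).chromaticNumber + 2 := by
  classical
  have hxu : x ≠ u ∧ ¬ G.Adj u x := by
    have : x ∈ ({x, y} : Set V) := by simp
    rw [← hu] at this; exact this
  have hyu : y ≠ u ∧ ¬ G.Adj u y := by
    have : y ∈ ({x, y} : Set V) := by simp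
    rw [← hu] at this; exact this
  have hxv : x ≠ v ∧ ¬ G.Adj v x := by
    have : x ∈ ({x, y} : Set V) := by simp
    rw [← hv] at this; exact this
  have hyv : y ≠ v ∧ ¬ G.Adj v y := by
    have : y ∈ ({x, y} : Set V) := by simp
    rw [← hv] at this; exact this
  have key_u : ∀ w, w ≠ u → w ≠ x → w ≠ y → G.Adj u w := by
    intro w h1 h2 h3
    by_contra hne
    have : w ∈ ({x, y} : Set V) := by rw [← hu]; exact ⟨h1, hne⟩
    simp only [Set.mem_insert_iff, Set.mem_singleton_iff] at this
    tauto
  have key_v : ∀ w, w ≠ v → w ≠ x → w ≠ y → G.Adj v w := by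
    intro w h1 h2 h3
    by_contra hne
    have : w ∈ ({x, y} : Set V) := by rw [← hv]; exact ⟨h1, hne⟩
    simp only [Set.mem_insert_iff, Set.mem_singleton_iff] at this
    tauto
  set S : Set V := (G.neighborSet u \ {v} : Set V) with hS
  have hmemS : ∀ w, w ∈ S ↔ (w ≠ u ∧ w ≠ v ∧ w ≠ x ∧ w ≠ y) := by
    intro w
    constructor
    · rintro ⟨hadj, hwv⟩
      simp only [SimpleGraph.mem_neighborSet] at hadj
      refine ⟨fun h => G.irrefl (h ▸ hadj), ?_, ?_, ?_⟩
      · simpa using hwv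
      · rintro rfl; exact hxu.2 hadj
      · rintro rfl; exact hyu.2 hadj
    · rintro ⟨h1, h2, h3, h4⟩
      exact ⟨key_u w (Ne.symm (fun h => h1 h.symm)) h3 h4, by simpa using h2⟩
  -- upper bound: from a coloring of the induced graph, build one of G
  have upper : ∀ n : ℕ, (G.induce S).Colorable n → G.Colorable (n + 2) := by
    intro n ⟨D⟩
    have : Fintype.card (Fin n ⊕ Fin 2) = n + 2 := by simp
    rw [← this]
    apply SimpleGraph.Coloring.colorable
    refine SimpleGraph.Coloring.mk
      (fun w => if h : w ∈ S then Sum.inl (D ⟨w, h⟩)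
        else Sum.inr (if w = u ∨ w = x then 0 else 1)) ?_
    intro a b hab heq
    have hne_uvxy : ∀ w, w = v ∨ w = y → ¬(w = u ∨ w = x) := by
      rintro w (rfl | rfl)
      · push_neg
        exact ⟨huv.ne', fun h => hxv.1 h.symm⟩
      · push_neg
        exact ⟨hyu.1, fun h => hxy h.symm⟩
    by_cases ha : a ∈ S <;> by_cases hb : b ∈ S
    · rw [dif_pos ha, dif_pos hb] at heq
      exact D.valid (show (G.induce S).Adj ⟨a, ha⟩ ⟨b, hb⟩ from hab) (Sum.inl.inj heq)
    · rw [dif_pos ha, dif_neg hb] at heq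
      exact absurd heq (by simp)
    · rw [dif_neg ha, dif_pos hb] at heq
      exact absurd heq (by simp)
    · rw [dif_neg ha, dif_neg hb] at heq
      have heq2 := Sum.inr.inj heq
      have ha' : (a = u ∨ a = x) ∨ (a = v ∨ a = y) := by
        by_contra h
        push_neg at h
        exact ha ((hmemS a).2 ⟨h.1.1, h.2.1, h.1.2, h.2.2⟩)
      have hb' : (b = u ∨ b = x) ∨ (b = v ∨ b = y) := by
        by_contra h
        push_neg at h
        exact hb ((hmemS b).2 ⟨h.1.1, h.2.1, h.1.2, h.2.2⟩)
      rcases ha' with hA | hA <;> rcases hb' with hB | hB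
      · rcases hA with rfl | rfl <;> rcases hB with rfl | rfl
        · exact G.irrefl hab
        · exact hxu.2 hab
        · exact hxu.2 hab.symm
        · exact G.irrefl hab
      · rw [if_pos hA, if_neg (hne_uvxy b hB)] at heq2
        exact absurd heq2 (by decide)
      · rw [if_neg (hne_uvxy a hA), if_pos hB] at heq2
        exact absurd heq2 (by decide)
      · rcases hA with rfl | rfl <;> rcases hB with rfl | rfl
        · exact G.irrefl hab
        · exact hyv.2 hab
        · exact hyv.2 hab.symm
        · exact G.irrefl hab
  -- lower bound
  have lower : ∀ k : ℕ, G.Colorable k → 2 ≤ k ∧ (G.induce S).Colorable (k - 2) := by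
    intro k ⟨C⟩
    have hCuv : C u ≠ C v := C.valid huv
    have hk2 : 2 ≤ k := by
      have : ({C u, C v} : Finset (Fin k)).card ≤ Fintype.card (Fin k) :=
        Finset.card_le_card (Finset.subset_univ _)
      simpa [Finset.card_insert_of_notMem, hCuv] using this
    refine ⟨hk2, ?_⟩
    let α := {c : Fin k // c ≠ C u ∧ c ≠ C v}
    have hcard : Fintype.card α = k - 2 := by
      rw [Fintype.card_subtype]
      have heqf : (Finset.univ.filter fun c => c ≠ C u ∧ c ≠ C v)
          = Finset.univ \ {C u, C v} := by
        ext c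
        simp [and_comm]
      rw [heqf, Finset.card_sdiff_of_subset (Finset.subset_univ _), Finset.card_univ, Fintype.card_fin,
        Finset.card_insert_of_notMem (by simpa using hCuv), Finset.card_singleton]
    rw [← hcard]
    apply SimpleGraph.Coloring.colorable
    refine SimpleGraph.Coloring.mk (fun w => ⟨C w.1, ?_, ?_⟩) ?_
    · intro h
      have hadj : G.Adj u w.1 := w.2.1
      exact C.valid hadj h.symm
    · intro h
      have hw := (hmemS w.1).1 w.2
      have hadj : G.Adj v w.1 := key_v w.1 hw.2.1 hw.2.2.1 hw.2.2.2
      exact C.valid hadj h.symm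
    · intro a b hab heq
      have : G.Adj a.1 b.1 := hab
      exact C.valid this (congrArg Subtype.val heq)
  -- assemble
  refine ⟨Ne.symm hxu.1, hxu.2, Ne.symm hyv.1, hyv.2, ?_⟩
  have hGcol : G.Colorable (Fintype.card V) := G.colorable_of_fintype
  obtain ⟨hk2, hScol⟩ := lower _ hGcol
  set n : ℕ := ENat.toNat (G.induce S).chromaticNumber with hn
  have hScoln : (G.induce S).Colorable n :=
    SimpleGraph.colorable_chromaticNumber hScol
  have hSchrom : (G.induce S).chromaticNumber = (n : ℕ∞) := by
    rw [hn, ENat.coe_toNat]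
    intro h
    exact (SimpleGraph.chromaticNumber_ne_top_iff_exists.2 ⟨_, hScol⟩) h
  have hup : G.chromaticNumber ≤ ((n + 2 : ℕ) : ℕ∞) :=
    (upper n hScoln).chromaticNumber_le
  set k : ℕ := ENat.toNat G.chromaticNumber with hkdef
  have hGcolk : G.Colorable k := SimpleGraph.colorable_chromaticNumber hGcol
  have hGchrom : G.chromaticNumber = (k : ℕ∞) := by
    rw [hkdef, ENat.coe_toNat]
    intro h
    exact (SimpleGraph.chromaticNumber_ne_top_iff_exists.2 ⟨_, hGcol⟩) h
  obtain ⟨hk2', hScolk⟩ := lower k hGcolk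
  have hlow : n ≤ k - 2 := by
    have := hScolk.chromaticNumber_le
    rw [hSchrom] at this
    exact_mod_cast this
  have hup' : k ≤ n + 2 := by
    rw [hGchrom] at hup
    exact_mod_cast hup
  have hkn : k = n + 2 := by omega
  rw [hGchrom, hSchrom, hkn]
  push_cast
  ring
end

section
/- Let G = (V,E) be a finite simple graph and B ⊆ V. Suppose C ⊆ V \ B is a clique with B = {v ∈ V \ C : ∃ c ∈ C, {v,c} ∉ E}. Then χ(G) ≥ χ(G[V \ B]) and χ(G[V \ B]) = χ(G[V \ (B ∪ C)]) + |C|. -/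
theorem stmt_16 {V : Type*} [Fintype V] (G : SimpleGraph V) (B C : Set V)
    (hsub : C ⊆ Bᶜ)
    (hclique : G.IsClique C)
    (hB : B = {v : V | v ∉ C ∧ ∃ c ∈ C, ¬ G.Adj v c}) :
    (G.induce (Bᶜ : Set V)).chromaticNumber ≤ G.chromaticNumber ∧
    (G.induce (Bᶜ : Set V)).chromaticNumber =
      (G.induce ((B ∪ C)ᶜ : Set V)).chromaticNumber + C.ncard := by
  classical
  constructor
  · exact SimpleGraph.chromaticNumber_mono_of_hom (SimpleGraph.Embedding.induce _).toHom
  · set H1 := G.induce (Bᶜ : Set V) with hH1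
    set H2 := G.induce ((B ∪ C)ᶜ : Set V) with hH2
    -- key adjacency fact
    have key : ∀ (v : V), v ∈ Bᶜ → ∀ c ∈ C, v ≠ c → G.Adj v c := by
      intro v hv c hc hne
      by_cases hvC : v ∈ C
      · exact hclique hvC hc hne
      · by_contra hadj
        exact hv (hB ▸ ⟨hvC, c, hc, hadj⟩)
    have hCfin : Fintype ↥C := Fintype.ofFinite _
    have hcard : Fintype.card ↥C = C.ncard := by
      rw [← Nat.card_coe_set_eq, Nat.card_eq_fintype_card]
    -- finiteness
    obtain ⟨n1, hn1⟩ : ∃ n, H1.Colorable n := ⟨_, H1.colorable_of_fintype⟩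
    obtain ⟨n2, hn2⟩ : ∃ n, H2.Colorable n := ⟨_, H2.colorable_of_fintype⟩
    set m1 := ENat.toNat H1.chromaticNumber with hm1
    set m2 := ENat.toNat H2.chromaticNumber with hm2
    have hc1 : H1.Colorable m1 := SimpleGraph.colorable_chromaticNumber hn1
    have hc2 : H2.Colorable m2 := SimpleGraph.colorable_chromaticNumber hn2
    have hne1 : H1.chromaticNumber ≠ ⊤ :=
      SimpleGraph.chromaticNumber_ne_top_iff_exists.2 ⟨n1, hn1⟩
    have hne2 : H2.chromaticNumber ≠ ⊤ :=
      SimpleGraph.chromaticNumber_ne_top_iff_exists.2 ⟨n2, hn2⟩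
    have he1 : H1.chromaticNumber = (m1 : ℕ∞) := (ENat.coe_toNat hne1).symm
    have he2 : H2.chromaticNumber = (m2 : ℕ∞) := (ENat.coe_toNat hne2).symm
    -- direction 1 : H1 colorable with m2 + |C| colors
    have dir1 : H1.Colorable (m2 + C.ncard) := by
      obtain ⟨f2⟩ := hc2
      have hmem : ∀ v : V, v ∈ Bᶜ → v ∉ C → v ∈ (B ∪ C)ᶜ := by
        intro v hv hc hm
        rcases (Set.mem_union _ _ _).mp hm with h | h
        · exact hv h
        · exact hc h
      have col : H1.Coloring (Fin m2 ⊕ ↥C) := by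
        refine SimpleGraph.Coloring.mk
          (fun v => if h : (v : V) ∈ C then Sum.inr ⟨v, h⟩
            else Sum.inl (f2 ⟨v, hmem v v.2 h⟩)) ?_
        rintro ⟨u, hu⟩ ⟨v, hv⟩ hadj
        have hGadj : G.Adj u v := hadj
        have hne : u ≠ v := hGadj.ne
        by_cases huC : u ∈ C <;> by_cases hvC : v ∈ C
        · simp only [dif_pos huC, dif_pos hvC]
          intro hcon
          exact hne (congrArg Subtype.val (Sum.inr_injective hcon))
        · simp only [dif_pos huC, dif_neg hvC]
          exact fun h => Sum.inr_ne_inl h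
        · simp only [dif_neg huC, dif_pos hvC]
          exact fun h => Sum.inl_ne_inr h
        · simp only [dif_neg huC, dif_neg hvC]
          intro hcon
          have hadj2 : H2.Adj ⟨u, hmem u hu huC⟩ ⟨v, hmem v hv hvC⟩ := hGadj
          exact f2.valid hadj2 (Sum.inl_injective hcon)
      have := col.colorable
      convert this using 1
      simp [hcard]
    -- direction 2 : from an m1-coloring of H1, get that C.ncard ≤ m1 and
    -- H2 is colorable with m1 - C.ncard colors
    obtain ⟨f1⟩ := hc1
    set ι : ↥C → ↥(Bᶜ : Set V) := Set.inclusion hsub with hι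
    have hinj : Function.Injective (f1 ∘ ι) := by
      intro c c' hcc
      by_contra hne
      have hvne : (c : V) ≠ (c' : V) := fun h => hne (Subtype.ext h)
      have hadj : H1.Adj (ι c) (ι c') := by
        simp only [hH1, SimpleGraph.comap_adj, Function.Embedding.coe_subtype]
        exact hclique c.2 c'.2 hvne
      exact f1.valid hadj hcc
    set S : Set (Fin m1) := Set.range (f1 ∘ ι) with hS
    have hSfin : Fintype ↥S := Fintype.ofFinite _
    have hSc : Fintype ↥(Sᶜ) := Fintype.ofFinite _
    have hScard : Fintype.card ↥S = C.ncard := by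
      rw [← Nat.card_eq_fintype_card, hS, Nat.card_range_of_injective hinj,
        Nat.card_eq_fintype_card, hcard]
    have hkle : C.ncard ≤ m1 := by
      rw [← hScard]
      simpa using Fintype.card_le_of_injective _ (Subtype.val_injective (p := (· ∈ S)))
    have dir2 : H2.Colorable (m1 - C.ncard) := by
      have col : H2.Coloring ↥(Sᶜ) := by
        refine SimpleGraph.Coloring.mk (fun v => ⟨f1 ⟨v, ?_⟩, ?_⟩) ?_
        · exact fun h => v.2 (Or.inl h)
        · rintro ⟨c, hc⟩
          have hvC : (v : V) ∉ C := fun h => v.2 (Or.inr h)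
          have hvB : (v : V) ∈ Bᶜ := fun h => v.2 (Or.inl h)
          have hvne : (v : V) ≠ (c : V) := fun h => hvC (h ▸ c.2)
          have hadj : H1.Adj ⟨v, hvB⟩ (ι c) := by
            simp only [hH1, SimpleGraph.comap_adj, Function.Embedding.coe_subtype]
            exact key v hvB c c.2 hvne
          exact f1.valid hadj hc.symm
        · rintro ⟨u, hu⟩ ⟨v, hv⟩ hadj hcon
          have : H1.Adj ⟨u, fun h => hu (Or.inl h)⟩ ⟨v, fun h => hv (Or.inl h)⟩ := hadj
          exact f1.valid this (congrArg Subtype.val hcon)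
      have := col.colorable
      have hcc : Fintype.card ↥(Sᶜ) = m1 - C.ncard := by
        rw [← Nat.card_eq_fintype_card, Nat.card_eq_fintype_card (α := ↥(Sᶜ)),
          Fintype.card_compl_set, Fintype.card_fin, hScard]
      rwa [hcc] at this
    -- combine
    rw [he1, he2]
    have h1 : H1.chromaticNumber ≤ (m2 + C.ncard : ℕ) := dir1.chromaticNumber_le
    have h2 : H2.chromaticNumber ≤ (m1 - C.ncard : ℕ) := dir2.chromaticNumber_le
    rw [he1, Nat.cast_le] at h1
    rw [he2, Nat.cast_le] at h2
    have : m1 = m2 + C.ncard := le_antisymm h1 (by omega)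
    rw [this]
    push_cast
    ring
end
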